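/- arXiv:2202.07992 — 3 statements merged into one kernel-verified Lean document; each statement's English description precedes it below -/
import Mathlib

section
/- Let q be a positive natural number and let x, y ∈ ℝ^n be vectors such that x_i·y_i ≠ 0 for some index i and y_j ≠ 0 for some index j. Then (∑_{i=1}^n |x_i|^{2q+1} y_i²) / (∑_{i=1}^n |x_i|^{2q} y_i²) ≥ ((∑_{i=1}^n |x_i|^{2q} y_i²) / (∑_{i=1}^n y_i²))^{1/(2q)}. -/
/-!
Write `A`, `B`, `C` for the sums of `|xᵢ|^(2q+1) yᵢ²`, `|xᵢ|^(2q) yᵢ²` and `yᵢ²`. Hölder's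
inequality for the weights `yᵢ²` with exponents `(2q+1)/(2q)` and `2q+1` gives
`B ≤ C^(1/(2q+1)) A^(2q/(2q+1))`, i.e. `B^(2q+1) ≤ C A^(2q)`, which rearranges to
`B / C ≤ (A / B)^(2q)`; taking `2q`-th roots is the claim.
-/

open Finset Real

theorem sum_pow_mul_pow_succ_le {ι : Type*} (s : Finset ι) {a w : ι → ℝ} (ha : ∀ i, 0 ≤ a i)
    (hw : ∀ i, 0 ≤ w i) (k : ℕ) :
    (∑ i ∈ s, a i ^ k * w i) ^ (k + 1) ≤ (∑ i ∈ s, w i) * (∑ i ∈ s, a i ^ (k + 1) * w i) ^ k := by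
  rcases Nat.eq_zero_or_pos k with rfl | hk
  · simp
  set W := ∑ i ∈ s, w i
  set S := ∑ i ∈ s, a i ^ (k + 1) * w i
  have hW : 0 ≤ W := sum_nonneg fun i _ => hw i
  have hS : 0 ≤ S := sum_nonneg fun i _ => mul_nonneg (pow_nonneg (ha i) _) (hw i)
  have hkR : (0 : ℝ) < k := Nat.cast_pos.mpr hk
  have holder := inner_le_weight_mul_Lp_of_nonneg s (p := (k + 1) / k)
    (by rw [le_div_iff₀ hkR]; linarith) w (fun i => a i ^ k) hw fun i => pow_nonneg (ha i) k
  have hpow : ∀ i, (a i ^ k) ^ ((k + 1 : ℝ) / k) = a i ^ (k + 1) := fun i => by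
    rw [← rpow_natCast, ← rpow_mul (ha i), mul_div_cancel₀ _ hkR.ne', ← Nat.cast_succ, rpow_natCast]
  simp only [hpow, inv_div] at holder
  calc (∑ i ∈ s, a i ^ k * w i) ^ (k + 1)
      ≤ (W ^ (1 - k / (k + 1 : ℝ)) * S ^ (k / (k + 1 : ℝ))) ^ (k + 1) := by
        simp only [W, S, mul_comm (a _ ^ _)]
        gcongr
        exact sum_nonneg fun i _ => mul_nonneg (hw i) (pow_nonneg (ha i) _)
    _ = W * S ^ k := by
        rw [mul_pow, ← rpow_mul_natCast hW, ← rpow_mul_natCast hS]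
        push_cast
        field_simp
        simp

theorem rpow_inv_div_le_div_of_pow_succ_le {A B C : ℝ} {k : ℕ} (hk : k ≠ 0) (hA : 0 ≤ A)
    (hB : 0 ≤ B) (h : B ^ (k + 1) ≤ C * A ^ k) : (B / C) ^ ((1 : ℝ) / k) ≤ A / B := by
  rcases hB.eq_or_lt with rfl | hB
  · -- both sides are `0`: `0 / C = 0`, `0 ^ (1 / k) = 0` and `A / 0 = 0`
    simp [hk]
  have hC : 0 < C := by
    by_contra! hC
    have : C * A ^ k ≤ 0 := mul_nonpos_of_nonpos_of_nonneg hC (pow_nonneg hA k)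
    linarith [pow_pos hB (k + 1)]
  rw [one_div, rpow_inv_le_iff_of_pos (by positivity) (by positivity) (by positivity), rpow_natCast,
    div_pow, div_le_div_iff₀ hC (by positivity)]
  linarith [pow_succ' B k]

theorem stmt_0_general (n q : ℕ) (hq : 1 ≤ q) (x y : Fin n → ℝ) :
    (∑ i, |x i| ^ (2 * q + 1) * (y i) ^ 2) / (∑ i, |x i| ^ (2 * q) * (y i) ^ 2) ≥
      ((∑ i, |x i| ^ (2 * q) * (y i) ^ 2) / (∑ i, (y i) ^ 2)) ^ ((1 : ℝ) / (2 * q)) := by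
  have holder := sum_pow_mul_pow_succ_le univ (fun i => abs_nonneg (x i))
    (fun i => sq_nonneg (y i)) (2 * q)
  have key := rpow_inv_div_le_div_of_pow_succ_le (by omega)
    (sum_nonneg fun i _ => by positivity) (sum_nonneg fun i _ => by positivity) holder
  exact_mod_cast key

/-- Hölder-type inequality for weighted power sums (Lemma in the paper). -/
theorem stmt_0 (n q : ℕ) (hq : 1 ≤ q) (x y : Fin n → ℝ)
    (hxy : ∃ i, x i * y i ≠ 0) (hy : ∃ j, y j ≠ 0) :
    (∑ i, |x i| ^ (2 * q + 1) * (y i) ^ 2) / (∑ i, |x i| ^ (2 * q) * (y i) ^ 2) ≥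
      ((∑ i, |x i| ^ (2 * q) * (y i) ^ 2) / (∑ i, (y i) ^ 2)) ^ ((1 : ℝ) / (2 * q)) :=
  stmt_0_general n q hq x y
end

section
/- Let A be a real symmetric positive semidefinite n×n matrix with largest eigenvalue λ₁ > 0 and orthonormal eigenbasis u_1,…,u_n, let S ∈ ℝ^{n×d} with Sᵀu₁ ≠ 0, let q ≥ 1, and set Y = A^q S. Then max over nonzero v ∈ range(Y) of (vᵀAv)/(λ₁ vᵀv) raised to the power (2q+1) is at least cos²θ(u₁, S), where cos²θ(u₁, S) = max over nonzero w ∈ range(S) of ⟨u₁, w⟩²/‖w‖². -/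
/-!
Expand `w = S a` in the eigenbasis, `w = ∑ cᵢ uᵢ`, and let `T k = ∑ cᵢ² λᵢᵏ` (`moment c lam k`).
The Rayleigh quotient of `A^q w` is `T (2q+1) / (λ₁ T (2q))`. By Cauchy–Schwarz `T` is
log-convex, so the ratios `T (k+1) / T k` increase and `T (2q+1) / T 0`, their product over
`k ≤ 2q`, is at most `(T (2q+1) / T (2q)) ^ (2q+1)`. Since `T (2q+1) ≥ c₁² λ₁^(2q+1)`, this gives
`c₁² / ‖w‖² ≤ (T (2q+1) / (λ₁ T (2q))) ^ (2q+1)`.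
-/

open Matrix

section LogConvex

variable {T : ℕ → ℝ}

lemma monotone_div_succ_of_sq_le_mul (hpos : ∀ k, 0 < T k)
    (hlc : ∀ k, T (k + 1) ^ 2 ≤ T k * T (k + 2)) : Monotone fun k => T (k + 1) / T k := by
  refine monotone_nat_of_le_succ fun k => ?_
  rw [div_le_div_iff₀ (hpos k) (hpos (k + 1))]
  nlinarith [hlc k]

lemma div_zero_le_div_pow_of_sq_le_mul (hpos : ∀ k, 0 < T k)
    (hlc : ∀ k, T (k + 1) ^ 2 ≤ T k * T (k + 2)) (m : ℕ) :
    T (m + 1) / T 0 ≤ (T (m + 1) / T m) ^ (m + 1) := by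
  have hratio := monotone_div_succ_of_sq_le_mul hpos hlc
  suffices ∀ j ≤ m + 1, T j / T 0 ≤ (T (m + 1) / T m) ^ j from this _ le_rfl
  intro j hj
  induction j with
  | zero => simp [(hpos 0).ne']
  | succ j ih =>
    calc T (j + 1) / T 0 = T (j + 1) / T j * (T j / T 0) := by
          field_simp [(hpos j).ne']
      _ ≤ T (m + 1) / T m * (T (m + 1) / T m) ^ j :=
          mul_le_mul (hratio (by omega)) (ih (by omega))
            (div_pos (hpos _) (hpos _)).le (div_pos (hpos _) (hpos _)).le
      _ = (T (m + 1) / T m) ^ (j + 1) := by ring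

end LogConvex

section Moments

variable {ι : Type*} [Fintype ι]

def moment (c lam : ι → ℝ) (k : ℕ) : ℝ := ∑ i, c i ^ 2 * lam i ^ k

variable {c lam : ι → ℝ}

lemma moment_nonneg (hlam : ∀ i, 0 ≤ lam i) (k : ℕ) : 0 ≤ moment c lam k :=
  Finset.sum_nonneg fun i _ => mul_nonneg (sq_nonneg _) (pow_nonneg (hlam i) _)

lemma sq_mul_pow_le_moment (hlam : ∀ i, 0 ≤ lam i) (i : ι) (k : ℕ) :
    c i ^ 2 * lam i ^ k ≤ moment c lam k :=
  Finset.single_le_sum (f := fun i => c i ^ 2 * lam i ^ k)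
    (fun j _ => mul_nonneg (sq_nonneg _) (pow_nonneg (hlam j) _)) (Finset.mem_univ i)

lemma moment_pos (hlam : ∀ i, 0 ≤ lam i) {i : ι} (hc : c i ≠ 0) (hi : 0 < lam i) (k : ℕ) :
    0 < moment c lam k :=
  (by positivity : 0 < c i ^ 2 * lam i ^ k).trans_le (sq_mul_pow_le_moment hlam i k)

lemma moment_succ_le {Λ : ℝ} (hlam : ∀ i, 0 ≤ lam i) (hΛ : ∀ i, lam i ≤ Λ) (k : ℕ) :
    moment c lam (k + 1) ≤ Λ * moment c lam k := by
  rw [moment, moment, Finset.mul_sum]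
  refine Finset.sum_le_sum fun i _ => ?_
  calc c i ^ 2 * lam i ^ (k + 1) = lam i * (c i ^ 2 * lam i ^ k) := by ring
    _ ≤ Λ * (c i ^ 2 * lam i ^ k) :=
      mul_le_mul_of_nonneg_right (hΛ i) (mul_nonneg (sq_nonneg _) (pow_nonneg (hlam i) _))

lemma moment_succ_sq_le (hlam : ∀ i, 0 ≤ lam i) (k : ℕ) :
    moment c lam (k + 1) ^ 2 ≤ moment c lam k * moment c lam (k + 2) :=
  Finset.sum_sq_le_sum_mul_sum_of_sq_le_mul _
    (fun i _ => mul_nonneg (sq_nonneg _) (pow_nonneg (hlam i) _))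
    (fun i _ => mul_nonneg (sq_nonneg _) (pow_nonneg (hlam i) _))
    (fun i _ => le_of_eq (by ring))

lemma moment_succ_div_mem_Icc {Λ : ℝ} (hlam : ∀ i, 0 ≤ lam i) (hΛ : ∀ i, lam i ≤ Λ)
    (hΛpos : 0 < Λ) (k : ℕ) : moment c lam (k + 1) / (Λ * moment c lam k) ∈ Set.Icc 0 1 := by
  refine ⟨div_nonneg (moment_nonneg hlam _) (mul_nonneg hΛpos.le (moment_nonneg hlam _)), ?_⟩
  exact div_le_one_of_le₀ (moment_succ_le hlam hΛ k) (mul_nonneg hΛpos.le (moment_nonneg hlam _))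

lemma sq_div_moment_zero_le (hlam : ∀ i, 0 ≤ lam i) {i : ι} (hc : c i ≠ 0) (hi : 0 < lam i)
    (m : ℕ) :
    c i ^ 2 / moment c lam 0 ≤ (moment c lam (m + 1) / (lam i * moment c lam m)) ^ (m + 1) := by
  set T := moment c lam
  have hT : ∀ k, 0 < T k := moment_pos hlam hc hi
  calc c i ^ 2 / T 0 ≤ T (m + 1) / lam i ^ (m + 1) / T 0 := by
        refine div_le_div_of_nonneg_right ?_ (hT 0).le
        rw [le_div_iff₀ (by positivity)]
        exact sq_mul_pow_le_moment hlam i _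
    _ = T (m + 1) / T 0 / lam i ^ (m + 1) := div_right_comm _ _ _
    _ ≤ (T (m + 1) / T m) ^ (m + 1) / lam i ^ (m + 1) := by
        gcongr
        exact div_zero_le_div_pow_of_sq_le_mul hT (moment_succ_sq_le hlam) m
    _ = (T (m + 1) / (lam i * T m)) ^ (m + 1) := by
        rw [← div_pow, div_div, mul_comm]

end Moments

section Spectral

variable {n R : Type*} [Fintype n]

lemma Matrix.IsSymm.mulVec_dotProduct [CommSemiring R] {M : Matrix n n R} (hM : M.IsSymm)
    (x y : n → R) : M *ᵥ x ⬝ᵥ y = x ⬝ᵥ M *ᵥ y := by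
  rw [dotProduct_mulVec, ← mulVec_transpose, hM.eq]

lemma Matrix.pow_mulVec_of_mulVec_eq_smul [DecidableEq n] [CommSemiring R] {A : Matrix n n R}
    {μ : R} {v : n → R} (h : A *ᵥ v = μ • v) (p : ℕ) : (A ^ p) *ᵥ v = μ ^ p • v := by
  induction p with
  | zero => simp
  | succ p ih => rw [pow_succ', ← mulVec_mulVec, ih, mulVec_smul, h, smul_smul, pow_succ]

lemma Matrix.PosSemidef.nonneg_of_mulVec_eq_smul {A : Matrix n n ℝ} (hA : A.PosSemidef)
    {μ : ℝ} {v : n → ℝ} (hv : v ≠ 0) (h : A *ᵥ v = μ • v) : 0 ≤ μ := by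
  have hAv := hA.dotProduct_mulVec_nonneg v
  rw [h, star_trivial, dotProduct_smul, smul_eq_mul] at hAv
  exact nonneg_of_mul_nonneg_left hAv (dotProduct_self_star_pos_iff.mpr hv)

lemma dotProduct_eq_sum_of_orthonormal [DecidableEq n] [CommRing R] {u : n → n → R}
    (horth : ∀ i j, u i ⬝ᵥ u j = if i = j then 1 else 0) (w z : n → R) :
    w ⬝ᵥ z = ∑ i, (u i ⬝ᵥ w) * (u i ⬝ᵥ z) := by
  have hUUt : of u * (of u)ᵀ = 1 := by
    ext i j
    simpa [mul_apply, one_apply, dotProduct] using horth i j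
  have hUtU : (of u)ᵀ * of u = 1 := mul_eq_one_comm.mp hUUt
  calc w ⬝ᵥ z = w ⬝ᵥ ((of u)ᵀ * of u) *ᵥ z := by rw [hUtU, one_mulVec]
    _ = of u *ᵥ w ⬝ᵥ of u *ᵥ z := by
      rw [← mulVec_mulVec, dotProduct_mulVec, vecMul_transpose]
    _ = ∑ i, (u i ⬝ᵥ w) * (u i ⬝ᵥ z) := rfl

variable [DecidableEq n] {A : Matrix n n ℝ} {lam : n → ℝ} {u : n → n → ℝ}

lemma dotProduct_pow_mulVec_eq_moment (hA : A.IsSymm)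
    (horth : ∀ i j, u i ⬝ᵥ u j = if i = j then 1 else 0)
    (heig : ∀ i, A *ᵥ u i = lam i • u i) (w : n → ℝ) (p : ℕ) :
    w ⬝ᵥ (A ^ p) *ᵥ w = moment (fun i => u i ⬝ᵥ w) lam p := by
  rw [dotProduct_eq_sum_of_orthonormal horth, moment]
  refine Finset.sum_congr rfl fun i _ => ?_
  rw [← (hA.pow p).mulVec_dotProduct, pow_mulVec_of_mulVec_eq_smul (heig i), smul_dotProduct,
    smul_eq_mul]
  ring

lemma pow_mulVec_dotProduct_pow_mulVec_eq_moment (hA : A.IsSymm)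
    (horth : ∀ i j, u i ⬝ᵥ u j = if i = j then 1 else 0)
    (heig : ∀ i, A *ᵥ u i = lam i • u i) (w : n → ℝ) (q p : ℕ) :
    (A ^ q) *ᵥ w ⬝ᵥ (A ^ p) *ᵥ ((A ^ q) *ᵥ w) = moment (fun i => u i ⬝ᵥ w) lam (2 * q + p) := by
  rw [(hA.pow q).mulVec_dotProduct, mulVec_mulVec, mulVec_mulVec, ← pow_add, ← pow_add,
    dotProduct_pow_mulVec_eq_moment hA horth heig, two_mul, add_right_comm]

lemma rayleigh_pow_mulVec_eq_moment (hA : A.IsSymm)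
    (horth : ∀ i j, u i ⬝ᵥ u j = if i = j then 1 else 0)
    (heig : ∀ i, A *ᵥ u i = lam i • u i) (w : n → ℝ) (q : ℕ) (Λ : ℝ) :
    ((A ^ q) *ᵥ w ⬝ᵥ A *ᵥ ((A ^ q) *ᵥ w)) / (Λ * ((A ^ q) *ᵥ w ⬝ᵥ (A ^ q) *ᵥ w)) =
      moment (fun i => u i ⬝ᵥ w) lam (2 * q + 1) /
        (Λ * moment (fun i => u i ⬝ᵥ w) lam (2 * q)) := by
  have h1 := pow_mulVec_dotProduct_pow_mulVec_eq_moment hA horth heig w q 1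
  have h0 := pow_mulVec_dotProduct_pow_mulVec_eq_moment hA horth heig w q 0
  rw [pow_one] at h1
  rw [pow_zero, one_mulVec, add_zero] at h0
  rw [h1, h0]

end Spectral

theorem stmt_2_general (n d q : ℕ) [NeZero n]
    (A : Matrix (Fin n) (Fin n) ℝ) (hA : A.IsSymm) (hpsd : A.PosSemidef)
    (lam : Fin n → ℝ) (u : Fin n → (Fin n → ℝ))
    (horth : ∀ i j, u i ⬝ᵥ u j = if i = j then (1 : ℝ) else 0)
    (heig : ∀ i, A.mulVec (u i) = lam i • u i)
    (hmono : Antitone lam) (hlampos : 0 < lam 0)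
    (S : Matrix (Fin n) (Fin d) ℝ) :
    (sSup {r : ℝ | ∃ a : Fin d → ℝ, (A ^ q).mulVec (S.mulVec a) ≠ 0 ∧
        r = ((A ^ q).mulVec (S.mulVec a) ⬝ᵥ A.mulVec ((A ^ q).mulVec (S.mulVec a))) /
            (lam 0 * ((A ^ q).mulVec (S.mulVec a) ⬝ᵥ (A ^ q).mulVec (S.mulVec a)))}) ^
        (2 * q + 1) ≥
      sSup {c : ℝ | ∃ a : Fin d → ℝ, S.mulVec a ≠ 0 ∧
        c = (u 0 ⬝ᵥ S.mulVec a) ^ 2 / (S.mulVec a ⬝ᵥ S.mulVec a)} := by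
  have hlam : ∀ i, 0 ≤ lam i := fun i =>
    hpsd.nonneg_of_mulVec_eq_smul (fun h => by simpa [h] using horth i i) (heig i)
  have hrayleigh := rayleigh_pow_mulVec_eq_moment hA horth heig
  set Q := {r : ℝ | ∃ a : Fin d → ℝ, (A ^ q).mulVec (S.mulVec a) ≠ 0 ∧
        r = ((A ^ q).mulVec (S.mulVec a) ⬝ᵥ A.mulVec ((A ^ q).mulVec (S.mulVec a))) /
            (lam 0 * ((A ^ q).mulVec (S.mulVec a) ⬝ᵥ (A ^ q).mulVec (S.mulVec a)))}
  have hQ : ∀ r ∈ Q, r ∈ Set.Icc 0 1 := by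
    rintro _ ⟨a, -, rfl⟩
    rw [hrayleigh]
    exact moment_succ_div_mem_Icc hlam (fun i => hmono (Fin.zero_le i)) hlampos (2 * q)
  have hQ_nonneg : 0 ≤ sSup Q := Real.sSup_nonneg fun r hr => (hQ r hr).1
  refine Real.sSup_le ?_ (pow_nonneg hQ_nonneg _)
  rintro _ ⟨a, -, rfl⟩
  set c := fun i => u i ⬝ᵥ S *ᵥ a
  change c 0 ^ 2 / (S *ᵥ a ⬝ᵥ S *ᵥ a) ≤ _
  by_cases hc : c 0 = 0
  · rw [hc, zero_pow two_ne_zero, zero_div]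
    exact pow_nonneg hQ_nonneg _
  have hmem : moment c lam (2 * q + 1) / (lam 0 * moment c lam (2 * q)) ∈ Q := by
    refine ⟨a, fun h => (moment_pos hlam hc hlampos (2 * q)).ne' ?_, (hrayleigh _ q _).symm⟩
    rw [← add_zero (2 * q), ← pow_mulVec_dotProduct_pow_mulVec_eq_moment hA horth heig, h,
      zero_dotProduct]
  calc c 0 ^ 2 / (S *ᵥ a ⬝ᵥ S *ᵥ a) = c 0 ^ 2 / moment c lam 0 := by
        rw [← dotProduct_pow_mulVec_eq_moment hA horth heig, pow_zero, one_mulVec]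
    _ ≤ _ := sq_div_moment_zero_le hlam hc hlampos (2 * q)
    _ ≤ sSup Q ^ (2 * q + 1) :=
        pow_le_pow_left₀ (hQ _ hmem).1 (le_csSup ⟨1, fun r hr => (hQ r hr).2⟩ hmem) _

/-- The (2q+1)-th power of the best Rayleigh quotient over range(A^q S) is at least
the squared cosine of the angle between the top eigenvector and range(S). -/
theorem stmt_2 (n d q : ℕ) [NeZero n] (hq : 1 ≤ q)
    (A : Matrix (Fin n) (Fin n) ℝ) (hA : A.IsSymm) (hpsd : A.PosSemidef)
    (lam : Fin n → ℝ) (u : Fin n → (Fin n → ℝ))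
    (horth : ∀ i j, u i ⬝ᵥ u j = if i = j then (1 : ℝ) else 0)
    (heig : ∀ i, A.mulVec (u i) = lam i • u i)
    (hmono : Antitone lam) (hlampos : 0 < lam 0)
    (S : Matrix (Fin n) (Fin d) ℝ) (hS : Matrix.vecMul (u 0) S ≠ 0) :
    (sSup {r : ℝ | ∃ a : Fin d → ℝ, (A ^ q).mulVec (S.mulVec a) ≠ 0 ∧
        r = ((A ^ q).mulVec (S.mulVec a) ⬝ᵥ A.mulVec ((A ^ q).mulVec (S.mulVec a))) /
            (lam 0 * ((A ^ q).mulVec (S.mulVec a) ⬝ᵥ (A ^ q).mulVec (S.mulVec a)))}) ^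
        (2 * q + 1) ≥
      sSup {c : ℝ | ∃ a : Fin d → ℝ, S.mulVec a ≠ 0 ∧
        c = (u 0 ⬝ᵥ S.mulVec a) ^ 2 / (S.mulVec a ⬝ᵥ S.mulVec a)} :=
  stmt_2_general n d q A hA hpsd lam u horth heig hmono hlampos S
end

section
/- Fix q ≥ 1 and 0 < α < 1, and let A be the n×n diagonal matrix with A₁₁ = 1 and A_{ii} = α for i ≥ 2. For any S ∈ ℝ^{n×d} and any a ∈ ℝ^d with A^q S a ≠ 0, the Rayleigh-quotient ratio R_a = ((Sa)ᵀA^{2q+1}(Sa))/((Sa)ᵀA^{2q}(Sa)) satisfies R_a ≤ α^{−2q}·cos²θ(e₁, S) + α, where e₁ is the first standard basis vector and cos²θ(e₁,S) = max_{b: Sb≠0} ⟨e₁, Sb⟩²/‖Sb‖₂². -/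
/-!
With `v = S a` and `T = ∑_{i ≠ 0} v_i²`, the diagonal form gives `vᵀ A^k v = v₀² + α^k T`, so the
ratio is `(v₀² + α^{2q} α T) / (v₀² + α^{2q} T)`. The part coming from `v₀²` is at most
`α^{-2q} v₀² / ‖v‖²`, and `v₀² / ‖v‖²` is one of the values whose supremum is `cos²θ(e₁, S)`;
the part coming from `T` is at most `α`.
-/

open Matrix Finset

section

variable {ι R : Type*} [Fintype ι]

theorem dotProduct_self_pos [Ring R] [LinearOrder R] [IsStrictOrderedRing R] {v : ι → R}
    (hv : v ≠ 0) : 0 < v ⬝ᵥ v :=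
  (Fintype.sum_nonneg fun i => mul_self_nonneg (v i)).lt_of_ne'
    (dotProduct_self_eq_zero.not.mpr hv)

theorem sq_apply_le_dotProduct_self [Ring R] [LinearOrder R] [IsStrictOrderedRing R]
    (v : ι → R) (i : ι) : v i ^ 2 ≤ v ⬝ᵥ v := by
  rw [sq]
  exact single_le_sum (f := fun j => v j * v j) (fun j _ => mul_self_nonneg _) (mem_univ i)

theorem sq_apply_div_le_sSup {κ : Type*} [Fintype κ] (S : Matrix ι κ ℝ) (i₀ : ι) {b : κ → ℝ}
    (hb : S *ᵥ b ≠ 0) :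
    (S *ᵥ b) i₀ ^ 2 / (S *ᵥ b ⬝ᵥ S *ᵥ b) ≤
      sSup {c : ℝ | ∃ b : κ → ℝ, S *ᵥ b ≠ 0 ∧
        c = (S *ᵥ b) i₀ ^ 2 / (S *ᵥ b ⬝ᵥ S *ᵥ b)} := by
  refine le_csSup ⟨1, ?_⟩ ⟨b, hb, rfl⟩
  rintro c ⟨b, -, rfl⟩
  exact div_le_one_of_le₀ (sq_apply_le_dotProduct_self _ i₀)
    (Fintype.sum_nonneg fun i => mul_self_nonneg _)

variable [DecidableEq ι]

theorem dotProduct_diagonal_pow_mulVec [CommSemiring R] (w v : ι → R) (k : ℕ) :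
    v ⬝ᵥ (diagonal w ^ k) *ᵥ v = ∑ i, w i ^ k * v i ^ 2 := by
  simp only [dotProduct, diagonal_pow, mulVec_diagonal, Pi.pow_apply]
  exact sum_congr rfl fun i _ => by ring

theorem dotProduct_diagonal_ite_pow_mulVec [CommSemiring R] (i₀ : ι) (α : R) (v : ι → R)
    (k : ℕ) :
    v ⬝ᵥ (diagonal (fun i => if i = i₀ then 1 else α) ^ k) *ᵥ v =
      v i₀ ^ 2 + α ^ k * ∑ i ∈ univ.erase i₀, v i ^ 2 := by
  rw [dotProduct_diagonal_pow_mulVec, ← add_sum_erase _ _ (mem_univ i₀), if_pos rfl, one_pow,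
    one_mul, mul_sum]
  congr 1
  exact sum_congr rfl fun i hi => by rw [if_neg (ne_of_mem_erase hi)]

end

/- After subtracting `α`, the claim becomes `x (1 - α) / (x + s T) ≤ x / (s (x + T))`. -/
theorem div_le_inv_mul_div_add {x T s α : ℝ} (hx : 0 ≤ x) (hT : 0 ≤ T) (hxT : 0 < x + T)
    (hs : 0 < s) (hs1 : s ≤ 1) (hα : 0 ≤ α) :
    (x + s * α * T) / (x + s * T) ≤ s⁻¹ * (x / (x + T)) + α := by
  have hxsT : 0 < x + s * T := by nlinarith
  rw [div_le_iff₀ hxsT, inv_mul_eq_div, div_div, div_add' _ _ _ (by positivity),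
    div_mul_eq_mul_div, le_div_iff₀ (by positivity)]
  nlinarith [mul_nonneg hx hT, mul_nonneg (mul_nonneg hx hT) hα, mul_nonneg hx hx,
    mul_nonneg (mul_nonneg hx hx) (sub_nonneg.2 hs1), mul_nonneg (mul_nonneg hx hx) hα]

theorem stmt_13_general (n d q : ℕ) [NeZero n] (α : ℝ) (hα : α ∈ Set.Ioo (0 : ℝ) 1)
    (S : Matrix (Fin n) (Fin d) ℝ) (a : Fin d → ℝ)
    (A : Matrix (Fin n) (Fin n) ℝ)
    (hA : A = Matrix.diagonal (fun i : Fin n => if i = 0 then (1 : ℝ) else α))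
    (ha : (A ^ q).mulVec (S.mulVec a) ≠ 0) :
    (S.mulVec a ⬝ᵥ (A ^ (2 * q + 1)).mulVec (S.mulVec a)) /
        (S.mulVec a ⬝ᵥ (A ^ (2 * q)).mulVec (S.mulVec a)) ≤
      (α ^ (2 * q))⁻¹ *
          sSup {c : ℝ | ∃ b : Fin d → ℝ, S.mulVec b ≠ 0 ∧
            c = (S.mulVec b 0) ^ 2 / (S.mulVec b ⬝ᵥ S.mulVec b)} + α := by
  obtain ⟨hα0, hα1⟩ := hα
  set v := S *ᵥ a
  have hv : v ≠ 0 := fun h => ha (by rw [h, mulVec_zero])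
  set T := ∑ i ∈ univ.erase 0, v i ^ 2
  have hquad (k : ℕ) : v ⬝ᵥ (A ^ k) *ᵥ v = v 0 ^ 2 + α ^ k * T := by
    rw [hA, dotProduct_diagonal_ite_pow_mulVec]
  have hnorm : v ⬝ᵥ v = v 0 ^ 2 + T := by simpa using hquad 0
  have hratio := div_le_inv_mul_div_add (sq_nonneg (v 0)) (sum_nonneg fun i _ => sq_nonneg (v i))
    (hnorm ▸ dotProduct_self_pos hv) (pow_pos hα0 (2 * q)) (pow_le_one₀ hα0.le hα1.le) hα0.le
  calc v ⬝ᵥ (A ^ (2 * q + 1)) *ᵥ v / (v ⬝ᵥ (A ^ (2 * q)) *ᵥ v)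
      = (v 0 ^ 2 + α ^ (2 * q) * α * T) / (v 0 ^ 2 + α ^ (2 * q) * T) := by
        rw [hquad, hquad, pow_succ α (2 * q)]
    _ ≤ (α ^ (2 * q))⁻¹ * (v 0 ^ 2 / (v ⬝ᵥ v)) + α := hnorm ▸ hratio
    _ ≤ _ := by gcongr; exact sq_apply_div_le_sSup S 0 hv

/-- Deterministic core of the tightness construction: on the diagonal matrix with one
eigenvalue 1 and the rest α, the Rayleigh ratio is at most α^{-2q}·cos²θ(e₁,S) + α. -/
theorem stmt_13 (n d q : ℕ) [NeZero n] (hq : 1 ≤ q) (α : ℝ) (hα : α ∈ Set.Ioo (0 : ℝ) 1)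
    (S : Matrix (Fin n) (Fin d) ℝ) (a : Fin d → ℝ)
    (A : Matrix (Fin n) (Fin n) ℝ)
    (hA : A = Matrix.diagonal (fun i : Fin n => if i = 0 then (1 : ℝ) else α))
    (ha : (A ^ q).mulVec (S.mulVec a) ≠ 0) :
    (S.mulVec a ⬝ᵥ (A ^ (2 * q + 1)).mulVec (S.mulVec a)) /
        (S.mulVec a ⬝ᵥ (A ^ (2 * q)).mulVec (S.mulVec a)) ≤
      (α ^ (2 * q))⁻¹ *
          sSup {c : ℝ | ∃ b : Fin d → ℝ, S.mulVec b ≠ 0 ∧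
            c = (S.mulVec b 0) ^ 2 / (S.mulVec b ⬝ᵥ S.mulVec b)} + α :=
  stmt_13_general n d q α hα S a A hA ha
end
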